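/- Let ε be a real number with 0 < ε ≤ 1/2 and let L > 0. If a positive integer m satisfies m · 2π(cosh(ε/2) − 1) < 2(L sinh(3ε/2) + π(cosh(3ε/2) − 1)), then m < (5/ε)·L + 10. -/
import Mathlib
set_option maxHeartbeats 1000000

open Real

lemma exp_est (x : ℝ) (hx : |x| ≤ 1) :
    |Real.exp x - (1 + x + x^2/2 + x^3/6)| ≤ 5*x^4/96 := by
  have h := Real.exp_bound hx (n := 4) (by norm_num)
  simp only [Finset.sum_range_succ, Finset.sum_range_zero] at h
  have habs4 : |x|^4 = x^4 := by
    rw [← abs_pow, abs_of_nonneg (by positivity)]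
  norm_num [Nat.factorial, habs4] at h
  linarith [h]

theorem stmt_2 (ε L : ℝ) (hε0 : 0 < ε) (hε : ε ≤ 1/2) (hL : 0 < L)
    (m : ℕ) (hm : 0 < m)
    (h : (m : ℝ) * (2 * Real.pi * (Real.cosh (ε/2) - 1)) <
      2 * (L * Real.sinh (3*ε/2) + Real.pi * (Real.cosh (3*ε/2) - 1))) :
    (m : ℝ) < (5/ε) * L + 10 := by
  set t : ℝ := 3*ε/2 with ht
  have ht0 : 0 ≤ t := by positivity
  have ht1 : t ≤ 1 := by rw [ht]; linarith
  have ht2 : t^2 ≤ 1 := by nlinarith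
  have ht3 : t^3 ≤ t := by nlinarith
  have ht4 : t^4 ≤ t^2 := by nlinarith [sq_nonneg t]
  have ht4' : t^4 ≤ t := by nlinarith [sq_nonneg t]
  -- lower bound on cosh (ε/2) - 1
  have hlow : ε^2/8 ≤ Real.cosh (ε/2) - 1 := by
    have h2 : Real.cosh (ε/2) = Real.cosh (ε/4)^2 + Real.sinh (ε/4)^2 := by
      rw [show ε/2 = 2 * (ε/4) by ring, Real.cosh_two_mul]
    have hsq : Real.cosh (ε/4)^2 = Real.sinh (ε/4)^2 + 1 := Real.cosh_sq _
    have hs : ε/4 ≤ Real.sinh (ε/4) := Real.self_le_sinh_iff.2 (by linarith)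
    nlinarith [hs]
  -- upper bounds on sinh t and cosh t
  have hep := exp_est t (by rw [abs_of_nonneg ht0]; exact ht1)
  have hen := exp_est (-t) (by rw [abs_of_nonpos (by linarith)]; linarith)
  rw [abs_sub_le_iff] at hep hen
  obtain ⟨hep1, hep2⟩ := hep
  obtain ⟨hen1, hen2⟩ := hen
  have hscoshs : Real.cosh t = (Real.exp t + Real.exp (-t)) / 2 := Real.cosh_eq t
  have hsinhs : Real.sinh t = (Real.exp t - Real.exp (-t)) / 2 := Real.sinh_eq t
  have hpi : (3.141592 : ℝ) < Real.pi := Real.pi_gt_d6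
  have hcosh_up : Real.cosh t - 1 ≤ (5/9) * t^2 := by
    rw [hscoshs]
    nlinarith [hep1, hen1, ht4]
  have hsinh_up : Real.sinh t ≤ (5 * Real.pi / 12) * t := by
    rw [hsinhs]
    nlinarith [hep1, hen2, ht3, ht4', mul_le_mul_of_nonneg_right hpi.le ht0]
  -- combine
  have hm1 : (1:ℝ) ≤ (m:ℝ) := by exact_mod_cast hm
  have hpi0 : (0:ℝ) < Real.pi := Real.pi_pos
  have key : (m : ℝ) * (2 * Real.pi * (ε^2/8)) <
      2 * (L * ((5 * Real.pi / 12) * t) + Real.pi * ((5/9) * t^2)) := by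
    calc (m : ℝ) * (2 * Real.pi * (ε^2/8))
        ≤ (m : ℝ) * (2 * Real.pi * (Real.cosh (ε/2) - 1)) := by
          refine mul_le_mul_of_nonneg_left ?_ (Nat.cast_nonneg m)
          have := mul_le_mul_of_nonneg_left hlow hpi0.le
          linarith
      _ < 2 * (L * Real.sinh t + Real.pi * (Real.cosh t - 1)) := h
      _ ≤ 2 * (L * ((5 * Real.pi / 12) * t) + Real.pi * ((5/9) * t^2)) := by
          have h1 : L * Real.sinh t ≤ L * ((5 * Real.pi / 12) * t) :=
            mul_le_mul_of_nonneg_left hsinh_up hL.le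
          have h2 : Real.pi * (Real.cosh t - 1) ≤ Real.pi * ((5/9) * t^2) :=
            mul_le_mul_of_nonneg_left hcosh_up hpi0.le
          linarith
  rw [ht] at key
  rw [show (5/ε) * L + 10 = (5*L + 10*ε)/ε by field_simp]
  rw [lt_div_iff₀ hε0]
  nlinarith [key, mul_pos hpi0 hε0]
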